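/- The β_need axiom preserves closedness: if a closed term e is a β_need redex Â[A₁[λx.Ǎ[E[x]]] A₂[v]] with Â[Ǎ] ∈ A, then its contractum Â[A₁[A₂[Ǎ[E[x]]{x:=v}]]] is also closed. -/

import Mathlib

set_option maxHeartbeats 1000000

/-- Terms of the call-by-need λ-calculus: e ::= x | λx.e | e e -/
inductive Term : Type
  | var : ℕ → Term
  | lam : ℕ → Term → Term
  | app : Term → Term → Term
deriving DecidableEq, Inhabited

/-- Substitution e{x := v}. -/
def subst : Term → ℕ → Term → Term
  | .var y, x, v => if y = x then v else .var y
  | .lam y e, x, v => if y = x then .lam y e else .lam y (subst e x v)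
  | .app e1 e2, x, v => .app (subst e1 x v) (subst e2 x v)

def FV : Term → Finset ℕ
  | .var y => {y}
  | .lam y e => FV e \ {y}
  | .app e1 e2 => FV e1 ∪ FV e2

def Closed (e : Term) : Prop := FV e = ∅

/-- Number of free occurrences of x. -/
def countFV (x : ℕ) : Term → ℕ
  | .var y => if y = x then 1 else 0
  | .lam y e => if y = x then 0 else countFV x e
  | .app e1 e2 => countFV x e1 + countFV x e2

def IsValue : Term → Prop
  | .lam _ _ => True
  | _ => False

/-- Answer contexts A ::= [] | A[λx.A] e -/
inductive ACtx : Type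
  | hole : ACtx
  | cons : ACtx → ℕ → ACtx → Term → ACtx
deriving DecidableEq

def plugA : ACtx → Term → Term
  | .hole, t => t
  | .cons A1 x A2 e, t => .app (plugA A1 (.lam x (plugA A2 t))) e

/-- Outer partial answer contexts Â ::= [] | A[Â] e -/
inductive AHat : Type
  | hole : AHat
  | cons : ACtx → AHat → Term → AHat
deriving DecidableEq

def plugHat : AHat → Term → Term
  | .hole, t => t
  | .cons A H e, t => .app (plugA A (plugHat H t)) e

/-- Inner partial answer contexts Ǎ ::= [] | A[λx.Ǎ] -/
inductive ACheck : Type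
  | hole : ACheck
  | cons : ACtx → ℕ → ACheck → ACheck
deriving DecidableEq

def plugCheck : ACheck → Term → Term
  | .hole, t => t
  | .cons A x C, t => plugA A (.lam x (plugCheck C t))

/-- Â[Ǎ] ∈ A : the composition of Â and Ǎ is an answer context. -/
def HatCheckOK (H : AHat) (C : ACheck) : Prop :=
  ∃ A : ACtx, ∀ t : Term, plugHat H (plugCheck C t) = plugA A t

/-- Evaluation contexts E ::= [] | E e | A[E] | Â[A[λx.Ǎ[E[x]]] E]  (Â[Ǎ] ∈ A) -/
inductive ECtx : Type
  | hole : ECtx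
  | appL : ECtx → Term → ECtx
  | inA : ACtx → ECtx → ECtx
  | need : AHat → ACtx → ℕ → ACheck → ECtx → ECtx → ECtx
deriving DecidableEq

def plugE : ECtx → Term → Term
  | .hole, t => t
  | .appL E e, t => .app (plugE E t) e
  | .inA A E, t => plugA A (plugE E t)
  | .need H A x C E1 E2, t =>
      plugHat H (.app (plugA A (.lam x (plugCheck C (plugE E1 (.var x))))) (plugE E2 t))

/-- Well-formedness: the side condition Â[Ǎ] ∈ A on the fourth production. -/
def EWF : ECtx → Prop
  | .hole => True
  | .appL E _ => EWF E
  | .inA _ E => EWF E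
  | .need H _ _ C E1 E2 => HatCheckOK H C ∧ EWF E1 ∧ EWF E2

/-- The β_need axiom (root redex → contractum). -/
inductive Red : Term → Term → Prop
  | mk (H : AHat) (A1 A2 : ACtx) (x : ℕ) (C : ACheck) (E : ECtx) (v : Term) :
      HatCheckOK H C → EWF E → IsValue v →
      Red (plugHat H (.app (plugA A1 (.lam x (plugCheck C (plugE E (.var x))))) (plugA A2 v)))
          (plugHat H (plugA A1 (plugA A2 (subst (plugCheck C (plugE E (.var x))) x v))))

/-- Compatible (contextual) closure of β_need. -/
inductive Step : Term → Term → Prop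
  | red {e e'} : Red e e' → Step e e'
  | appL {e1 e1' e2} : Step e1 e1' → Step (.app e1 e2) (.app e1' e2)
  | appR {e1 e2 e2'} : Step e2 e2' → Step (.app e1 e2) (.app e1 e2')
  | lam {x e e'} : Step e e' → Step (.lam x e) (.lam x e')

def Steps : Term → Term → Prop := Relation.ReflTransGen Step

/-- The equational theory λ_need ⊢ e = e'. -/
def EqNeed : Term → Term → Prop := Relation.EqvGen Step

def IsAnswer (t : Term) : Prop := ∃ (A : ACtx) (v : Term), IsValue v ∧ t = plugA A v

/-- Standard reduction: contract the β_need redex in evaluation position. -/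
def SR (e e' : Term) : Prop :=
  ∃ (E : ECtx) (a b : Term), EWF E ∧ Red a b ∧ e = plugE E a ∧ e' = plugE E b

def SRs : Term → Term → Prop := Relation.ReflTransGen SR
/- Parallel reduction ⇒ of λ_need (with parallel reduction of contexts). -/
mutual
inductive Par : Term → Term → Prop
  | refl (e) : Par e e
  | app {e1 e1' e2 e2'} : Par e1 e1' → Par e2 e2' → Par (.app e1 e2) (.app e1' e2')
  | lam {x e e'} : Par e e' → Par (.lam x e) (.lam x e')
  | redex {H H' : AHat} {A1 A1' A2 A2' : ACtx} {x : ℕ} {C C' : ACheck} {E E' : ECtx} {v v' : Term} :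
      HatCheckOK H C → HatCheckOK H' C' → EWF E → EWF E' → IsValue v → IsValue v' →
      ParHat H H' → ParA A1 A1' → ParA A2 A2' → ParCheck C C' → ParE E E' → Par v v' →
      Par (plugHat H (.app (plugA A1 (.lam x (plugCheck C (plugE E (.var x))))) (plugA A2 v)))
          (plugHat H' (plugA A1' (plugA A2' (subst (plugCheck C' (plugE E' (.var x))) x v'))))

inductive ParA : ACtx → ACtx → Prop
  | hole : ParA .hole .hole
  | cons {A1 A1' A2 A2' x e e'} :
      ParA A1 A1' → ParA A2 A2' → Par e e' → ParA (.cons A1 x A2 e) (.cons A1' x A2' e')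

inductive ParHat : AHat → AHat → Prop
  | hole : ParHat .hole .hole
  | cons {A A' H H' e e'} :
      ParA A A' → ParHat H H' → Par e e' → ParHat (.cons A H e) (.cons A' H' e')

inductive ParCheck : ACheck → ACheck → Prop
  | hole : ParCheck .hole .hole
  | cons {A A' x C C'} : ParA A A' → ParCheck C C' → ParCheck (.cons A x C) (.cons A' x C')

inductive ParE : ECtx → ECtx → Prop
  | hole : ParE .hole .hole
  | appL {E E' e e'} : ParE E E' → Par e e' → ParE (.appL E e) (.appL E' e')
  | inA {A A' E E'} : ParA A A' → ParE E E' → ParE (.inA A E) (.inA A' E')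
  | need {H H' A A' x C C' E1 E1' E2 E2'} :
      HatCheckOK H C → HatCheckOK H' C' →
      ParHat H H' → ParA A A' → ParCheck C C' → ParE E1 E1' → ParE E2 E2' →
      ParE (.need H A x C E1 E2) (.need H' A' x C' E1' E2')
end

/-- Curry-Feys style standard reduction sequences. -/
inductive SRSeq : List Term → Prop
  | var (x : ℕ) : SRSeq [Term.var x]
  | lam (x : ℕ) {es : List Term} : SRSeq es → SRSeq (es.map (Term.lam x))
  | step {e0 e1 : Term} {es : List Term} : SR e0 e1 → SRSeq (e1 :: es) → SRSeq (e0 :: e1 :: es)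
  | app {es es' : List Term} : SRSeq es → SRSeq es' → es ≠ [] → es' ≠ [] →
      SRSeq (es.map (fun e => Term.app e es'.head!) ++
             es'.tail.map (fun e' => Term.app es.getLast! e'))
/- Size metric on parallel reductions, as a relation. -/
mutual
inductive PSize : Term → Term → ℕ → Prop
  | refl (e) : PSize e e 0
  | app {e1 e1' e2 e2' n1 n2} :
      PSize e1 e1' n1 → PSize e2 e2' n2 → PSize (.app e1 e2) (.app e1' e2') (n1 + n2)
  | lam {x e e' n} : PSize e e' n → PSize (.lam x e) (.lam x e') n
  | redex {H H' : AHat} {A1 A1' A2 A2' : ACtx} {x : ℕ} {C C' : ACheck} {E E' : ECtx}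
      {v v' : Term} {n0 n1 n2 m m' n4 : ℕ} :
      HatCheckOK H C → HatCheckOK H' C' → EWF E → EWF E' → IsValue v → IsValue v' →
      HSize H H' n0 → ASize A1 A1' n1 → ASize A2 A2' n2 →
      CSize C C' m → ESize E E' m' → PSize v v' n4 →
      PSize (plugHat H (.app (plugA A1 (.lam x (plugCheck C (plugE E (.var x))))) (plugA A2 v)))
            (plugHat H' (plugA A1' (plugA A2' (subst (plugCheck C' (plugE E' (.var x))) x v'))))
            (1 + n0 + n1 + n2 + (m + m') +
              countFV x (plugCheck C' (plugE E' (.var x))) * n4)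

inductive ASize : ACtx → ACtx → ℕ → Prop
  | hole : ASize .hole .hole 0
  | cons {A1 A1' A2 A2' x e e' n1 n2 n3} :
      ASize A1 A1' n1 → ASize A2 A2' n2 → PSize e e' n3 →
      ASize (.cons A1 x A2 e) (.cons A1' x A2' e') (n1 + n2 + n3)

inductive HSize : AHat → AHat → ℕ → Prop
  | hole : HSize .hole .hole 0
  | cons {A A' H H' e e' n1 n2 n3} :
      ASize A A' n1 → HSize H H' n2 → PSize e e' n3 →
      HSize (.cons A H e) (.cons A' H' e') (n1 + n2 + n3)

inductive CSize : ACheck → ACheck → ℕ → Prop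
  | hole : CSize .hole .hole 0
  | cons {A A' x C C' n1 n2} :
      ASize A A' n1 → CSize C C' n2 → CSize (.cons A x C) (.cons A' x C') (n1 + n2)

inductive ESize : ECtx → ECtx → ℕ → Prop
  | hole : ESize .hole .hole 0
  | appL {E E' e e' n1 n2} :
      ESize E E' n1 → PSize e e' n2 → ESize (.appL E e) (.appL E' e') (n1 + n2)
  | inA {A A' E E' n1 n2} :
      ASize A A' n1 → ESize E E' n2 → ESize (.inA A E) (.inA A' E') (n1 + n2)
  | need {H H' A A' x C C' E1 E1' E2 E2' n0 n1 n2 n3 n4} :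
      HatCheckOK H C → HatCheckOK H' C' →
      HSize H H' n0 → ASize A A' n1 → CSize C C' n2 → ESize E1 E1' n3 → ESize E2 E2' n4 →
      ESize (.need H A x C E1 E2) (.need H' A' x C' E1' E2') (n0 + n1 + n2 + n3 + n4)
end

/-- Number of λ-binders on the path from the root of an answer context to its hole. -/
def lamDepth : ACtx → ℕ
  | .hole => 0
  | .cons A1 _ A2 _ => lamDepth A1 + 1 + lamDepth A2

/-- Number of application-argument positions on the path from the root to the hole. -/
def argDepth : ACtx → ℕ
  | .hole => 0
  | .cons A1 _ A2 _ => argDepth A1 + 1 + argDepth A2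

/-- Number of λ-binders in an inner partial answer context (identifies the depth of
a function-argument pair on the spine). -/
def aLams : ACtx → ℕ
  | .hole => 0
  | .cons A1 _ A2 _ => aLams A1 + 1 + aLams A2

def checkLams : ACheck → ℕ
  | .hole => 0
  | .cons A _ C => aLams A + 1 + checkLams C

/- General contexts C ::= [] | λx.C | C e | e C. -/
inductive Ctx : Type
  | hole : Ctx
  | lam : ℕ → Ctx → Ctx
  | appL : Ctx → Term → Ctx
  | appR : Term → Ctx → Ctx

def plugC : Ctx → Term → Term
  | .hole, t => t
  | .lam x c, t => .lam x (plugC c t)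
  | .appL c e, t => .app (plugC c t) e
  | .appR e c, t => .app e (plugC c t)

/-- Observational equivalence for λ_need. -/
def ObsEq (e1 e2 : Term) : Prop :=
  ∀ c : Ctx, ((∃ a, IsAnswer a ∧ EqNeed (plugC c e1) a) ↔ (∃ a, IsAnswer a ∧ EqNeed (plugC c e2) a))

/- The modified Ariola-Felleisen calculus. -/
inductive AafCtx : Type
  | hole : AafCtx
  | cons : ℕ → AafCtx → Term → AafCtx

def plugAaf : AafCtx → Term → Term
  | .hole, t => t
  | .cons x A e, t => .app (.lam x (plugAaf A t)) e

inductive EafCtx : Type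
  | hole : EafCtx
  | appL : EafCtx → Term → EafCtx
  | inA : AafCtx → EafCtx → EafCtx
  | need : ℕ → EafCtx → EafCtx → EafCtx

def plugEaf : EafCtx → Term → Term
  | .hole, t => t
  | .appL E e, t => .app (plugEaf E t) e
  | .inA A E, t => plugAaf A (plugEaf E t)
  | .need x E1 E2, t => .app (.lam x (plugEaf E1 (.var x))) (plugEaf E2 t)

/-- Axioms β'_need, lift', assoc' of the modified Ariola-Felleisen calculus. -/
inductive RedAF : Term → Term → Prop
  | deref {x E v} : IsValue v →
      RedAF (.app (.lam x (plugEaf E (.var x))) v) (subst (plugEaf E (.var x)) x v)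
  | lift {x A v e1 e2} : IsValue v →
      RedAF (.app (.app (.lam x (plugAaf A v)) e1) e2)
            (.app (.lam x (plugAaf A (.app v e2))) e1)
  | assoc {x y E A v e} : IsValue v →
      RedAF (.app (.lam x (plugEaf E (.var x))) (.app (.lam y (plugAaf A v)) e))
            (.app (.lam y (plugAaf A (.app (.lam x (plugEaf E (.var x))) v))) e)

def SRAF (e e' : Term) : Prop :=
  ∃ (E : EafCtx) (a b : Term), RedAF a b ∧ e = plugEaf E a ∧ e' = plugEaf E b

def SRAFs : Term → Term → Prop := Relation.ReflTransGen SRAF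

def IsAnswerAF (t : Term) : Prop := ∃ (A : AafCtx) (v : Term), IsValue v ∧ t = plugAaf A v
/- λ_step: labeled terms ê ::= x | λx.ê | ê ê | x:ê (labels are variables). -/
inductive LTerm : Type
  | var : ℕ → LTerm
  | lam : ℕ → LTerm → LTerm
  | app : LTerm → LTerm → LTerm
  | lab : ℕ → LTerm → LTerm
deriving DecidableEq, Inhabited

def toL : Term → LTerm
  | .var x => .var x
  | .lam x e => .lam x (toL e)
  | .app e1 e2 => .app (toL e1) (toL e2)

/-- Subterm relation on labeled terms. -/
inductive LSub : LTerm → LTerm → Prop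
  | refl (t) : LSub t t
  | lam {s x e} : LSub s e → LSub s (.lam x e)
  | appL {s e1 e2} : LSub s e1 → LSub s (.app e1 e2)
  | appR {s e1 e2} : LSub s e2 → LSub s (.app e1 e2)
  | lab {s x e} : LSub s e → LSub s (.lab x e)

/-- Consistently labeled: any two subterms with the same label are identical. -/
def CL (t : LTerm) : Prop :=
  ∀ x e1 e2, LSub (.lab x e1) t → LSub (.lab x e2) t → e1 = e2

/-- Whole-program label substitution ê₁{x := ê}: replace every subterm labeled x by x:ê. -/
def lsubst : LTerm → ℕ → LTerm → LTerm
  | .lab y e1, x, e => if y = x then .lab x e else .lab y (lsubst e1 x e)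
  | .lam y e1, x, e => .lam y (lsubst e1 x e)
  | .app e1 e2, x, e => .app (lsubst e1 x e) (lsubst e2 x e)
  | .var y, _, _ => .var y

/-- Variable substitution on labeled terms. -/
def vsubstL : LTerm → ℕ → LTerm → LTerm
  | .var y, x, v => if y = x then v else .var y
  | .lam y e1, x, v => if y = x then .lam y e1 else .lam y (vsubstL e1 x v)
  | .app e1 e2, x, v => .app (vsubstL e1 x v) (vsubstL e2 x v)
  | .lab y e1, x, v => .lab y (vsubstL e1 x v)

def lLabels : LTerm → Finset ℕ
  | .var _ => ∅
  | .lam _ e => lLabels e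
  | .app e1 e2 => lLabels e1 ∪ lLabels e2
  | .lab x e => insert x (lLabels e)

def lVars : LTerm → Finset ℕ
  | .var x => {x}
  | .lam x e => insert x (lVars e)
  | .app e1 e2 => lVars e1 ∪ lVars e2
  | .lab x e => insert x (lVars e)

/- λ_step evaluation contexts Ê ::= [] | Ê ê | x:Ê. -/
inductive LECtx : Type
  | hole : LECtx
  | appL : LECtx → LTerm → LECtx
  | lab : ℕ → LECtx → LECtx

def plugL : LECtx → LTerm → LTerm
  | .hole, t => t
  | .appL E e, t => .app (plugL E t) e
  | .lab x E, t => .lab x (plugL E t)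

/-- The hole is not under a label. -/
def NoLabel : LECtx → Prop
  | .hole => True
  | .appL E _ => NoLabel E
  | .lab _ _ => False

def compL : LECtx → LECtx → LECtx
  | .hole, E2 => E2
  | .appL E e, E2 => .appL (compL E E2) e
  | .lab x E, E2 => .lab x (compL E E2)

/-- ȳ:(λx.ê): a λ-abstraction under zero or more labels. -/
inductive IsLabeledLam : LTerm → ℕ → LTerm → Prop
  | base {x e} : IsLabeledLam (.lam x e) x e
  | lab {t x e y} : IsLabeledLam t x e → IsLabeledLam (.lab y t) x e

/-- The β_step reduction of λ_step. -/
inductive LStep : LTerm → LTerm → Prop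
  | noLab {E f x e1 e2 w} : NoLabel E → IsLabeledLam f x e1 →
      w ∉ lLabels (plugL E (.app f e2)) → w ∉ lVars (plugL E (.app f e2)) →
      LStep (plugL E (.app f e2)) (plugL E (vsubstL e1 x (.lab w e2)))
  | underLab {E1 E2 z f x e1 e2 w} : NoLabel E2 → IsLabeledLam f x e1 →
      w ∉ lLabels (plugL (compL E1 (.lab z E2)) (.app f e2)) →
      w ∉ lVars (plugL (compL E1 (.lab z E2)) (.app f e2)) →
      LStep (plugL (compL E1 (.lab z E2)) (.app f e2))
            (lsubst (plugL (compL E1 (.lab z E2)) (vsubstL e1 x (.lab w e2))) z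
                    (plugL E2 (vsubstL e1 x (.lab w e2))))

/- The CKH store machine (Launchbury's natural semantics as an abstract machine). -/
inductive CKHFrame : Type
  | arg : Term → CKHFrame
  | varF : ℕ → CKHFrame

abbrev Heap := List (ℕ × Term)

def tVars : Term → Finset ℕ
  | .var x => {x}
  | .lam x e => insert x (tVars e)
  | .app e1 e2 => tVars e1 ∪ tVars e2

def frameVars : List CKHFrame → Finset ℕ
  | [] => ∅
  | .arg e :: K => tVars e ∪ frameVars K
  | .varF x :: K => insert x (frameVars K)

def heapVars : Heap → Finset ℕ
  | [] => ∅
  | (x, e) :: Γ => insert x (tVars e ∪ heapVars Γ)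

structure CKHState where
  c : Term
  k : List CKHFrame
  h : Heap

inductive CKHStep : CKHState → CKHState → Prop
  | pusharg {e1 e2 K Γ} : CKHStep ⟨.app e1 e2, K, Γ⟩ ⟨e1, .arg e2 :: K, Γ⟩
  | descend {x e1 e2 K Γ y} :
      y ∉ tVars (Term.lam x e1) ∪ tVars e2 ∪ frameVars K ∪ heapVars Γ →
      CKHStep ⟨.lam x e1, .arg e2 :: K, Γ⟩ ⟨subst e1 x (.var y), K, (y, e2) :: Γ⟩
  | lookup {x e K Γ1 Γ2} :
      CKHStep ⟨.var x, K, Γ1 ++ (x, e) :: Γ2⟩ ⟨e, .varF x :: K, Γ1 ++ Γ2⟩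
  | update {v x K Γ} : IsValue v →
      CKHStep ⟨v, .varF x :: K, Γ⟩ ⟨v, K, (x, v) :: Γ⟩

/-- One pass of heap substitution: replace free variables by their heap terms, labeled. -/
def applyHeapOnce (Γ : Heap) (t : LTerm) : LTerm :=
  Γ.foldr (fun p t => vsubstL t p.1 (.lab p.1 (toL p.2))) t

/-- e{Γ}: substitute heap bindings as labeled terms (iterated to resolve chains). -/
def substHeap (Γ : Heap) (e : Term) : LTerm :=
  (applyHeapOnce Γ)^[Γ.length + 1] (toL e)

/-- φ_L: reconstruct a λ_step term from a CKH machine state. -/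
def buildL : Term → List CKHFrame → Heap → LTerm
  | e, [], Γ => substHeap Γ e
  | e, .arg e2 :: K, Γ => buildL (.app e e2) K Γ
  | e, .varF x :: K, Γ => buildL (.var x) K ((x, e) :: Γ)
/- The CK transition system for λ_need. -/
inductive CKF : Type
  | arg : Term → CKF
  | lamF : ℕ → CKF
  | bod : ℕ → List CKF → List CKF → CKF

/-- φ_F: convert a frame list to a λ_need context (as a function on terms). -/
def phiF : List CKF → Term → Term
  | [], t => t
  | .arg e :: K, t => phiF K (.app t e)
  | .lamF x :: K, t => phiF K (.lam x t)
  | .bod x K1 K2 :: K, t => phiF K (.app (phiF K2 (.lam x (phiF K1 (.var x)))) t)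

/-- balance: #arg-frames − #lam-frames, up to the first bod frame. -/
def bal : List CKF → ℤ
  | [] => 0
  | .arg _ :: K => bal K + 1
  | .lamF _ :: K => bal K - 1
  | .bod _ _ _ :: _ => 0

def argPre : List CKF → ℕ
  | [] => 0
  | .arg _ :: K => argPre K + 1
  | .lamF _ :: K => argPre K
  | .bod _ _ _ :: _ => 0

def lamPre : List CKF → ℕ
  | [] => 0
  | .arg _ :: K => lamPre K
  | .lamF _ :: K => lamPre K + 1
  | .bod _ _ _ :: _ => 0

mutual
/-- Substitution on frames. -/
def substF : CKF → ℕ → Term → CKF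
  | .arg e, x, v => .arg (subst e x v)
  | .lamF y, _, _ => .lamF y
  | .bod y K1 K2, x, v => .bod y (substFs K1 x v) (substFs K2 x v)

/-- Substitution on frame lists. -/
def substFs : List CKF → ℕ → Term → List CKF
  | [], _, _ => []
  | F :: K, x, v => substF F x v :: substFs K x v
end

/-- The CK transitions. -/
inductive CKStep : Term × List CKF → Term × List CKF → Prop
  | pusharg {e1 e2 K} : CKStep (.app e1 e2, K) (e1, .arg e2 :: K)
  | descend {x e K} : bal K > 0 → CKStep (.lam x e, K) (e, .lamF x :: K)
  | lookup {x e K1 K2 K} :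
      (∃ (H : AHat) (C : ACheck) (E1 : ECtx) (A2 : ACtx) (E : ECtx),
        HatCheckOK H C ∧ EWF E1 ∧ EWF E ∧
        (∀ t, phiF K1 t = plugCheck C (plugE E1 t)) ∧
        (∀ t, phiF K2 t = plugA A2 t) ∧
        (∀ t, phiF K t = plugE E (plugHat H t))) →
      CKStep (.var x, K1 ++ .lamF x :: K2 ++ .arg e :: K) (e, .bod x K1 K2 :: K)
  | beta {v x K1 K2 K3 K} : IsValue v →
      (∃ A : ACtx, ∀ t, phiF K3 t = plugA A t) →
      CKStep (v, K3 ++ .bod x K1 K2 :: K) (v, substFs K1 x v ++ K3 ++ K2 ++ K)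

/-- φ: reconstruct a λ_need term from a CK state. -/
def buildCK : Term × List CKF → Term
  | (e, K) => phiF K e

/- Labeled frames, for the ψ mapping from CK states to λ_step terms. -/
inductive LF : Type
  | arg : LTerm → LF
  | lamF : ℕ → LF
  | bod : ℕ → List LF → List LF → LF

mutual
def toLF : CKF → LF
  | .arg e => .arg (toL e)
  | .lamF x => .lamF x
  | .bod x K1 K2 => .bod x (toLFs K1) (toLFs K2)

def toLFs : List CKF → List LF
  | [] => []
  | F :: K => toLF F :: toLFs K
end

def phiLF : List LF → LTerm → LTerm
  | [], t => t
  | .arg e :: K, t => phiLF K (.app t e)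
  | .lamF x :: K, t => phiLF K (.lam x t)
  | .bod x K1 K2 :: K, t => phiLF K (.app (phiLF K2 (.lam x (phiLF K1 (.var x)))) t)

mutual
def lfLabels : LF → Finset ℕ
  | .arg e => lLabels e
  | .lamF _ => ∅
  | .bod _ K1 K2 => lfsLabels K1 ∪ lfsLabels K2

def lfsLabels : List LF → Finset ℕ
  | [] => ∅
  | F :: K => lfLabels F ∪ lfsLabels K
end

/-- Labeled answer contexts over λ_step terms. -/
inductive LACtx : Type
  | hole : LACtx
  | cons : LACtx → ℕ → LACtx → LTerm → LACtx

def plugLA : LACtx → LTerm → LTerm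
  | .hole, t => t
  | .cons A1 x A2 e, t => .app (plugLA A1 (.lam x (plugLA A2 t))) e

/-- ψ' : the (partial, relational) mapping from CK states to λ_step terms. -/
inductive PsiRel : List LF → LTerm → LTerm → Prop
  | nil {e} : PsiRel [] e e
  | arg {K e e1 r} : PsiRel K (.app e e1) r → PsiRel (.arg e1 :: K) e r
  | bod {x K1 K2 K e r} :
      PsiRel (K1 ++ .lamF x :: K2 ++ .arg e :: K) (.var x) r →
      PsiRel (.bod x K1 K2 :: K) e r
  | lamF {x K1 e1 K2 e y r} :
      (∃ A : LACtx, ∀ t, phiLF K1 t = plugLA A t) →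
      y ∉ lLabels e ∪ lLabels e1 ∪ lfsLabels K1 ∪ lfsLabels K2 →
      y ∉ lVars e ∪ lVars e1 →
      PsiRel (K1 ++ K2) (vsubstL e x (.lab y e1)) r →
      PsiRel (.lamF x :: K1 ++ .arg e1 :: K2) e r


/-! β_need never creates free variables. Plugging into an answer context can only capture free
variables of the argument, so a bound `FV u ⊆ FV w ∪ T` survives plugging `u` and `w` into the
same context. The contractum puts `b{x:=v}` under the binders of `A₁`, which already scoped over
`λx.b` in the redex, and additionally under those of `A₂`; and `FV (b{x:=v}) ⊆ FV (λx.b) ∪ FV v`. -/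

theorem FV_subst_subset (e : Term) (x : ℕ) (v : Term) :
    FV (subst e x v) ⊆ FV e \ {x} ∪ FV v := by
  induction e with
  | var y => by_cases hy : y = x <;> simp [subst, FV, hy]
  | lam y e ih =>
    by_cases hy : y = x
    · simp [subst, FV, hy]
    · simp only [subst, hy, if_false, FV]
      grind
  | app e1 e2 ih1 ih2 =>
    simp only [subst, FV]
    grind

section FVBound

variable {u w : Term} {T : Finset ℕ}

theorem FV_lam_subset (x : ℕ) (h : FV u ⊆ FV w ∪ T) :
    FV (.lam x u) ⊆ FV (.lam x w) ∪ T := by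
  simp only [FV]
  grind

theorem FV_app_left_subset (e : Term) (h : FV u ⊆ FV w ∪ T) :
    FV (.app u e) ⊆ FV (.app w e) ∪ T := by
  simp only [FV]
  grind

theorem FV_plugA_subset (A : ACtx) (h : FV u ⊆ FV w ∪ T) :
    FV (plugA A u) ⊆ FV (plugA A w) ∪ T := by
  induction A generalizing u w with
  | hole => exact h
  | cons A1 x A2 e ih1 ih2 =>
    exact FV_app_left_subset e (ih1 (FV_lam_subset x (ih2 h)))

theorem FV_plugHat_subset (H : AHat) (h : FV u ⊆ FV w ∪ T) :
    FV (plugHat H u) ⊆ FV (plugHat H w) ∪ T := by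
  induction H generalizing u w with
  | hole => exact h
  | cons A H e ih => exact FV_app_left_subset e (FV_plugA_subset A (ih h))

end FVBound

theorem FV_plugA_plugA_subst_subset (A1 A2 : ACtx) (x : ℕ) (b v : Term) :
    FV (plugA A1 (plugA A2 (subst b x v))) ⊆
      FV (.app (plugA A1 (.lam x b)) (plugA A2 v)) := by
  have hsubst : FV (subst b x v) ⊆ FV v ∪ FV (.lam x b) :=
    (FV_subst_subset b x v).trans (Finset.union_comm _ _).le
  have hA2 : FV (plugA A2 (subst b x v)) ⊆ FV (.lam x b) ∪ FV (plugA A2 v) :=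
    (FV_plugA_subset A2 hsubst).trans (Finset.union_comm _ _).le
  exact FV_plugA_subset A1 hA2

theorem FV_subset_of_Red {e e' : Term} (h : Red e e') : FV e' ⊆ FV e := by
  obtain ⟨H, A1, A2, x, C, E, v, -, -, -⟩ := h
  simpa using FV_plugHat_subset H (T := ∅)
    (by simpa using FV_plugA_plugA_subst_subset A1 A2 x _ v)

/-- The β_need axiom preserves closedness: if a closed term is a β_need redex, its
contractum is also closed. -/
theorem betaNeed_preserves_closed (e e' : Term) (h : Red e e') (hc : Closed e) :
    Closed e' :=
  Finset.subset_empty.mp (hc ▸ FV_subset_of_Red h)
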